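/- arXiv:2208.08365 — 2 statements merged into one kernel-verified Lean document; each statement's English description precedes it below -/
import Mathlib

section
/- Let k be an algebraically closed field of characteristic zero and A ∈ k[[z]] of order n ≥ 2. For X₁, X₂ ∈ z·k[[z]], the equality A ∘ X₁ = A ∘ X₂ holds if and only if X₂ = φ ∘ X₁ for some φ of order 1 with A ∘ φ = A. -/
/-!
Write `A = M ^ n` with `M` of order one: `A = X ^ n * U` with `U` a unit, and `U` has an `n`-th
root (the binomial series `(1 + X) ^ (1 / n)` composed with `U / U(0) - 1`, times an `n`-th root
of `U(0)`). Then `A ∘ X₁ = A ∘ X₂` says `(M ∘ X₁) ^ n = (M ∘ X₂) ^ n`, and since `k⟦X⟧` is a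
domain containing the `n` distinct `n`-th roots of unity of `k`, `M ∘ X₂ = ξ • (M ∘ X₁)` with
`ξ ^ n = 1`. The transition map is `φ = M⁻¹ ∘ (ξ • M)`, where `M⁻¹` is the compositional inverse.
-/

open PowerSeries

/-- Composition (substitution) `comp A B = A ∘ B` of formal power series,
the standard coefficient formula, well-behaved when `B` has zero constant term. -/
noncomputable def comp {k : Type*} [Field k] (A B : PowerSeries k) : PowerSeries k :=
  PowerSeries.mk fun n =>
    ∑ i ∈ Finset.range (n + 1), (PowerSeries.coeff i A) * (PowerSeries.coeff n (B ^ i))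

/-- `iterComp φ j` is the `j`-fold compositional iterate `φ^{∘j}` (with `φ^{∘0} = z`). -/
noncomputable def iterComp {k : Type*} [Field k] (φ : PowerSeries k) : ℕ → PowerSeries k
  | 0 => PowerSeries.X
  | n + 1 => comp φ (iterComp φ n)

/-- Composition of a list of power series: `compList [A₁, …, A_r] = A₁ ∘ ⋯ ∘ A_r`. -/
noncomputable def compList {k : Type*} [Field k] : List (PowerSeries k) → PowerSeries k
  | [] => PowerSeries.X
  | a :: t => comp a (compList t)

theorem comp_eq_subst {k : Type*} [Field k] (A : k⟦X⟧) {B : k⟦X⟧} (hB : constantCoeff B = 0) :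
    comp A B = A.subst B := by
  ext m
  rw [comp, coeff_mk, coeff_subst' (HasSubst.of_constantCoeff_zero' hB),
    finsum_eq_sum_of_support_subset _ (s := Finset.range (m + 1))]
  · simp only [smul_eq_mul]
  intro i hi
  rw [Function.mem_support] at hi
  rw [Finset.coe_range, Set.mem_Iio]
  by_contra! hmi
  refine hi ?_
  rw [coeff_of_lt_order (φ := B ^ i) m, smul_zero]
  exact (by exact_mod_cast hmi : (m : ℕ∞) < i).trans_le
    (le_order_pow_of_constantCoeff_eq_zero i hB)

theorem IsPrimitiveRoot.exists_eq_pow_mul_of_pow_eq {R : Type*} [CommRing R] [IsDomain R]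
    {ζ : R} {n : ℕ} (hζ : IsPrimitiveRoot ζ n) (hn : 0 < n) {a b : R} (h : a ^ n = b ^ n) :
    ∃ i < n, b = ζ ^ i * a := by
  have := congrArg (Polynomial.eval b) (X_pow_sub_C_eq_prod hζ hn (α := a) rfl)
  rw [Polynomial.eval_sub, Polynomial.eval_pow, Polynomial.eval_X, Polynomial.eval_C, h, sub_self,
    Polynomial.eval_prod, eq_comm, Finset.prod_eq_zero_iff] at this
  obtain ⟨i, hi, hzero⟩ := this
  refine ⟨i, Finset.mem_range.mp hi, ?_⟩
  rwa [Polynomial.eval_sub, Polynomial.eval_X, Polynomial.eval_C, sub_eq_zero] at hzero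

namespace PowerSeries

variable {k : Type*} [Field k]

theorem order_eq_one_iff {R : Type*} [Semiring R] {φ : R⟦X⟧} :
    φ.order = 1 ↔ constantCoeff φ = 0 ∧ coeff 1 φ ≠ 0 := by
  rw [← Nat.cast_one, order_eq_nat]
  simp [and_comm]

theorem coeff_one_subst {R : Type*} [CommRing R] (f : R⟦X⟧) {g : R⟦X⟧}
    (hg : constantCoeff g = 0) :
    coeff 1 (f.subst g) = coeff 1 f * coeff 1 g := by
  rw [coeff_subst' (HasSubst.of_constantCoeff_zero' hg), finsum_eq_single _ 1]
  · rw [pow_one, smul_eq_mul]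
  intro d hd
  obtain rfl | hd2 : d = 0 ∨ 2 ≤ d := by omega
  · simp
  rw [coeff_of_lt_order (φ := g ^ d) 1, smul_zero]
  exact (by exact_mod_cast hd2 : ((1 : ℕ) : ℕ∞) < d).trans_le
    (le_order_pow_of_constantCoeff_eq_zero d hg)

theorem binomialSeries_pow {R A : Type*} [CommRing R] [BinomialRing R] [Ring A]
    [Algebra R A] (r : R) (m : ℕ) :
    binomialSeries A r ^ m = binomialSeries A (m * r) := by
  induction m with
  | zero => simp
  | succ m ih => rw [pow_succ, ih, ← binomialSeries_add, Nat.cast_succ, add_one_mul]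

theorem exists_pow_eq_of_constantCoeff_ne_zero [IsAlgClosed k] [CharZero k]
    {n : ℕ} (hn : n ≠ 0) {U : k⟦X⟧} (hU : constantCoeff U ≠ 0) : ∃ V : k⟦X⟧, V ^ n = U := by
  obtain ⟨b, hb⟩ := IsAlgClosed.exists_pow_nat_eq (constantCoeff U) (Nat.pos_of_ne_zero hn)
  set W := C (constantCoeff U)⁻¹ * U - 1
  have hW : HasSubst W := HasSubst.of_constantCoeff_zero' (by simp [W, hU])
  refine ⟨C b * (binomialSeries k (n⁻¹ : k)).subst W, ?_⟩
  rw [mul_pow, ← subst_pow hW, binomialSeries_pow, mul_inv_cancel₀ (by exact_mod_cast hn),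
    ← Nat.cast_one, binomialSeries_nat, pow_one, subst_add hW, subst_X hW]
  have h1 : (1 : k⟦X⟧).subst W = 1 := by rw [← coe_substAlgHom hW, map_one]
  rw [h1, ← map_pow, hb, add_sub_cancel, ← mul_assoc, ← map_mul, mul_inv_cancel₀ hU, map_one,
    one_mul]

theorem exists_eq_pow_of_order_eq [IsAlgClosed k] [CharZero k] {n : ℕ} (hn : n ≠ 0)
    {A : k⟦X⟧} (hA : A.order = n) :
    ∃ M : k⟦X⟧, constantCoeff M = 0 ∧ coeff 1 M ≠ 0 ∧ A = M ^ n := by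
  have hU : constantCoeff A.divXPowOrder ≠ 0 := by
    rw [Ne, constantCoeff_divXPowOrder_eq_zero_iff, ← order_eq_top, hA]
    exact ENat.natCast_ne_top n
  obtain ⟨V, hV⟩ := exists_pow_eq_of_constantCoeff_ne_zero hn hU
  refine ⟨X * V, by simp, ?_, ?_⟩
  · rw [mul_comm, coeff_succ_mul_X, coeff_zero_eq_constantCoeff_apply]
    intro hV0
    exact hU (by rw [← hV, map_pow, hV0, zero_pow hn])
  · have hA' := X_pow_order_mul_divXPowOrder (f := A)
    rw [hA, ENat.toNat_natCast] at hA'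
    rw [mul_pow, hV, hA']

theorem exists_smul_eq_of_pow_eq [IsAlgClosed k] [CharZero k] {n : ℕ} (hn : n ≠ 0)
    {P Q : k⟦X⟧} (h : P ^ n = Q ^ n) : ∃ ξ : k, ξ ^ n = 1 ∧ Q = ξ • P := by
  have : NeZero (n : k) := ⟨Nat.cast_ne_zero.mpr hn⟩
  obtain ⟨ζ, hζ⟩ := HasEnoughRootsOfUnity.exists_primitiveRoot k n
  obtain ⟨i, -, hi⟩ := (hζ.map_of_injective (f := C) C_injective).exists_eq_pow_mul_of_pow_eq
    (Nat.pos_of_ne_zero hn) h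
  refine ⟨ζ ^ i, by rw [← pow_mul, mul_comm, pow_mul, hζ.pow_eq_one, one_pow], ?_⟩
  rw [hi, smul_eq_C_mul, map_pow]

theorem subst_eq_subst_iff_of_order_eq [IsAlgClosed k] [CharZero k] {n : ℕ}
    (hn : n ≠ 0) {A : k⟦X⟧} (hA : A.order = n) {X₁ X₂ : k⟦X⟧} (h₁ : constantCoeff X₁ = 0)
    (h₂ : constantCoeff X₂ = 0) :
    A.subst X₁ = A.subst X₂ ↔ ∃ φ : k⟦X⟧, φ.order = 1 ∧ A.subst φ = A ∧ X₂ = φ.subst X₁ := by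
  have hX₁ := HasSubst.of_constantCoeff_zero' h₁
  have hX₂ := HasSubst.of_constantCoeff_zero' h₂
  constructor
  · obtain ⟨M, hM0, hM1, rfl⟩ := exists_eq_pow_of_order_eq hn hA
    intro h
    rw [subst_pow hX₁, subst_pow hX₂] at h
    obtain ⟨ξ, hξ, hMX⟩ := exists_smul_eq_of_pow_eq hn h
    set N := M.substInvOfIsUnit hM1.isUnit
    have hN := HasSubst.substInvOfIsUnit M hM1.isUnit
    have hM := HasSubst.of_constantCoeff_zero' hM0
    have hMN : M.subst N = X := subst_substInvOfIsUnit_right M hM0 hM1.isUnit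
    have hNM : N.subst M = X := subst_substInvOfIsUnit_left M hM0 hM1.isUnit
    have hξM0 : constantCoeff (ξ • M) = 0 := by simp [hM0]
    have hξM := HasSubst.of_constantCoeff_zero' hξM0
    have hφ0 : constantCoeff (N.subst (ξ • M)) = 0 :=
      constantCoeff_subst_eq_zero hξM0 _ (constantCoeff_substInvOfIsUnit M hM1.isUnit)
    refine ⟨N.subst (ξ • M), ?_, ?_, ?_⟩
    · rw [order_eq_one_iff, coeff_one_subst _ hξM0, coeff_one_substInvOfIsUnit, coeff_smul]
      have hξ0 : ξ ≠ 0 := ne_zero_pow hn (by rw [hξ]; exact one_ne_zero)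
      exact ⟨hφ0, mul_ne_zero (Units.ne_zero _) (mul_ne_zero hξ0 hM1)⟩
    · rw [subst_pow (HasSubst.of_constantCoeff_zero' hφ0), ← subst_comp_subst_apply hN hξM, hMN,
        subst_X hξM, smul_pow, hξ, one_smul]
    · rw [subst_comp_subst_apply hξM hX₁, subst_smul hX₁, ← hMX, ← subst_comp_subst_apply hM hX₂,
        hNM, subst_X hX₂]
  · rintro ⟨φ, hφ, hAφ, rfl⟩
    rw [← subst_comp_subst_apply (HasSubst.of_constantCoeff_zero' (order_eq_one_iff.mp hφ).1) hX₁,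
      hAφ]

end PowerSeries

theorem stmt9 {k : Type*} [Field k] [IsAlgClosed k] [CharZero k]
    {n : ℕ} (hn : 2 ≤ n) (A : PowerSeries k) (hA : A.order = (n : ℕ∞))
    (X₁ X₂ : PowerSeries k) (h₁ : constantCoeff X₁ = 0) (h₂ : constantCoeff X₂ = 0) :
    comp A X₁ = comp A X₂ ↔
      ∃ φ : PowerSeries k, φ.order = 1 ∧ comp A φ = A ∧ X₂ = comp φ X₁ := by
  rw [comp_eq_subst A h₁, comp_eq_subst A h₂, subst_eq_subst_iff_of_order_eq (by omega) hA h₁ h₂]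
  refine exists_congr fun φ => and_congr_right fun hφ => ?_
  rw [comp_eq_subst A (order_eq_one_iff.mp hφ).1, comp_eq_subst φ h₁]
end

section
/- Let k be an algebraically closed field of characteristic zero and A ∈ k[[z]] of order n ≥ 2. Then A has the form A(z) = z^r·R(z^m) for some R ∈ k[[z]] and integers m ≥ 2, r ≥ 0, if and only if every Böttcher function β_A of A has the form β_A(z) = z·L(z^m) for some L ∈ k[[z]] with nonzero constant term. -/
open PowerSeries

/-!
Say that a series is supported in the class `a` mod `m` if all its exponents are
`≡ a [MOD m]`; such supports add under products and multiply under composition. Then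
`A = z^r R(z^m)` says that `A` is supported in the class of its order `n`, and `β = z L(z^m)`
that `β` is supported in the class of `1`. Both implications compare coefficients of
`A ∘ β = β ∘ z^n` by strong induction, the truncation below the current degree `j` being
already supported in the right class. If `β` is supported in the class of `1`, coefficient `j`
of `A ∘ β` is `a_j b_1^j` plus terms in the class of `n`. If `A` is supported in the class of
`n`, coefficient `n - 1 + j` of `A ∘ β` is `n a_n b_1^(n-1) b_j` plus terms in the class of `n`,
and that of `β ∘ z^n` only involves `b_i` with `i < j`. The same recursion, solved for `b_j`,
builds a Böttcher function; this needs an `(n-1)`-th root of `1 / a_n` and division by `n`.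
-/

def SupportedModEq {R : Type*} [Semiring R] (m a : ℕ) (F : R⟦X⟧) : Prop :=
  ∀ i, coeff i F ≠ 0 → i ≡ a [MOD m]

section Support

variable {R : Type*} [Semiring R] {m a b : ℕ} {F G : R⟦X⟧}

theorem SupportedModEq.coeff_eq_zero (h : SupportedModEq m a F) {i : ℕ} (hi : ¬ i ≡ a [MOD m]) :
    coeff i F = 0 :=
  not_not.1 (mt (h i) hi)

theorem SupportedModEq.of_coeff_ne_zero (h : SupportedModEq m a F) (hb : coeff b F ≠ 0) :
    SupportedModEq m b F :=
  fun i hi => (h i hi).trans (h b hb).symm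

theorem supportedModEq_one : SupportedModEq m 0 (1 : R⟦X⟧) := by
  intro i hi
  rw [coeff_one] at hi
  rw [show i = 0 by by_contra h; simp [h] at hi]

theorem supportedModEq_X_pow (r : ℕ) : SupportedModEq m r (X ^ r : R⟦X⟧) := by
  intro i hi
  rw [coeff_X_pow] at hi
  rw [show i = r by by_contra h; simp [h] at hi]

theorem SupportedModEq.mul (hF : SupportedModEq m a F) (hG : SupportedModEq m b G) :
    SupportedModEq m (a + b) (F * G) := by
  intro i hi
  rw [coeff_mul] at hi
  obtain ⟨⟨u, v⟩, huv, hne⟩ := Finset.exists_ne_zero_of_sum_ne_zero hi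
  rw [← Finset.HasAntidiagonal.mem_antidiagonal.1 huv]
  exact (hF u (left_ne_zero_of_mul hne)).add (hG v (right_ne_zero_of_mul hne))

theorem SupportedModEq.pow (hF : SupportedModEq m a F) (i : ℕ) :
    SupportedModEq m (i * a) (F ^ i) := by
  induction i with
  | zero => simpa using supportedModEq_one
  | succ i ih => simpa [pow_succ, add_mul] using ih.mul hF

theorem supportedModEq_of_forall_trunc
    (h : ∀ j, SupportedModEq m a (trunc j F : R⟦X⟧) → ¬ j ≡ a [MOD m] → coeff j F = 0) :
    SupportedModEq m a F := by
  intro j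
  induction j using Nat.strong_induction_on with
  | _ j ih =>
    intro hj
    by_contra hja
    refine hj (h j (fun i hi => ?_) hja)
    rw [Polynomial.coeff_coe, coeff_trunc] at hi
    split_ifs at hi with hij
    · exact ih i hij hi
    · exact absurd rfl hi

end Support

theorem coeff_self_pow {R : Type*} [CommSemiring R] {B : R⟦X⟧} (hB : X ∣ B) (j : ℕ) :
    coeff j (B ^ j) = coeff 1 B ^ j := by
  obtain ⟨B, rfl⟩ := hB
  rw [mul_pow, coeff_X_pow_mul', if_pos le_rfl, Nat.sub_self, coeff_zero_eq_constantCoeff,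
    map_pow, ← coeff_zero_eq_constantCoeff, ← coeff_succ_X_mul]

theorem coeff_add_pow_of_dvd {R : Type*} [CommRing R] {T E : R⟦X⟧} {n i j : ℕ}
    (hT : X ∣ T) (hE : X ^ j ∣ E) (hn : 1 ≤ n) (hj : 2 ≤ j) (hi : n ≤ i) :
    coeff (n - 1 + j) ((T + E) ^ i) =
      coeff (n - 1 + j) (T ^ i) + if i = n then n * coeff 1 T ^ (n - 1) * coeff j E else 0 := by
  obtain ⟨n, rfl⟩ := Nat.exists_eq_add_of_le' hn
  obtain ⟨i, rfl⟩ := Nat.exists_eq_add_of_le' (hn.trans hi)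
  obtain ⟨j, rfl⟩ := Nat.exists_eq_add_of_le' hj
  obtain ⟨T, rfl⟩ := hT
  obtain ⟨E, rfl⟩ := hE
  obtain ⟨Q, hQ⟩ := sq_dvd_add_pow_sub_sub (X ^ (j + 1) * E) T (i + 1)
  have hexp : (X * T + X ^ (j + 2) * E) ^ (i + 1) = (X * T) ^ (i + 1) +
      X ^ (i + j + 2) * (((i + 1 : ℕ) : R⟦X⟧) * T ^ i * E) + X ^ (i + 2 * j + 3) * (E ^ 2 * Q) := by
    rw [show X * T + X ^ (j + 2) * E = X * (T + X ^ (j + 1) * E) by ring, mul_pow,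
      Nat.add_sub_cancel] at *
    linear_combination X ^ (i + 1) * hQ
  have hrem : coeff (n + (j + 2)) (X ^ (i + 2 * j + 3) * (E ^ 2 * Q)) = 0 := by
    rw [coeff_X_pow_mul', if_neg (by omega)]
  rw [Nat.add_sub_cancel, hexp, map_add, map_add, hrem, add_zero, add_right_inj,
    coeff_X_pow_mul']
  by_cases hin : i = n
  · subst hin
    rw [if_pos (by omega), Nat.sub_eq_zero_of_le (by omega)]
    simp [coeff_zero_eq_constantCoeff, coeff_X_pow_mul']
  · rw [if_neg (by omega), if_neg (by omega)]

section Comp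

variable {k : Type*} [Field k] {m n a d j N : ℕ} {A B : k⟦X⟧}

theorem coeff_comp (A B : k⟦X⟧) (N : ℕ) :
    coeff N (comp A B) = ∑ i ∈ Finset.range (N + 1), coeff i A * coeff N (B ^ i) :=
  coeff_mk _ _

theorem coeff_comp_X_pow (R : k⟦X⟧) (hm : 0 < m) (N : ℕ) :
    coeff N (comp R (X ^ m)) = if m ∣ N then coeff (N / m) R else 0 := by
  rw [coeff_comp]
  simp_rw [← pow_mul, coeff_X_pow]
  split_ifs with hd
  · rw [Finset.sum_eq_single (N / m)]
    · rw [if_pos (Nat.mul_div_cancel' hd).symm, mul_one]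
    · rintro i - hi
      rw [if_neg (fun h => hi (by rw [h, Nat.mul_div_cancel_left i hm])), mul_zero]
    · intro h
      exact absurd (Finset.mem_range.2 (Nat.lt_succ_of_le (Nat.div_le_self N m))) h
  · exact Finset.sum_eq_zero fun i _ => by rw [if_neg (fun h => hd ⟨i, h⟩), mul_zero]

theorem SupportedModEq.comp (hA : SupportedModEq m a A) (hB : SupportedModEq m d B) :
    SupportedModEq m (a * d) (comp A B) := by
  intro N hN
  rw [coeff_comp] at hN
  obtain ⟨i, -, hi⟩ := Finset.exists_ne_zero_of_sum_ne_zero hN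
  exact (hB.pow i N (right_ne_zero_of_mul hi)).trans ((hA i (left_ne_zero_of_mul hi)).mul_right d)

theorem supportedModEq_comp_X_pow (R : k⟦X⟧) : SupportedModEq m 0 (comp R (X ^ m)) := by
  intro N hN
  rw [coeff_comp] at hN
  obtain ⟨i, -, hi⟩ := Finset.exists_ne_zero_of_sum_ne_zero hN
  rw [← pow_mul, coeff_X_pow] at hi
  rw [show N = m * i by by_contra h; simp [h] at hi]
  exact Nat.modEq_zero_iff_dvd.2 (dvd_mul_right m i)

theorem supportedModEq_X_pow_mul_comp_X_pow (R : k⟦X⟧) (r : ℕ) :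
    SupportedModEq m r (X ^ r * comp R (X ^ m)) :=
  (supportedModEq_X_pow r).mul (supportedModEq_comp_X_pow R)

theorem exists_eq_X_pow_mul_comp_X_pow (hm : 0 < m) (h : SupportedModEq m a A) :
    ∃ R : k⟦X⟧, A = X ^ (a % m) * comp R (X ^ m) := by
  refine ⟨mk fun q => coeff (a % m + m * q) A, ?_⟩
  ext N
  rw [coeff_X_pow_mul']
  split_ifs with haN
  · rw [coeff_comp_X_pow _ hm]
    split_ifs with hd
    · rw [coeff_mk, Nat.mul_div_cancel' hd, Nat.add_sub_cancel' haN]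
    · refine h.coeff_eq_zero fun hN => hd ?_
      exact (Nat.modEq_iff_dvd' haN).1 ((Nat.mod_modEq a m).trans hN.symm)
  · refine h.coeff_eq_zero fun hN => haN ?_
    exact (show N % m = a % m from hN) ▸ Nat.mod_le N m

theorem exists_eq_X_mul_comp_X_pow (hm : 2 ≤ m) (hB : SupportedModEq m 1 B)
    (hB1 : coeff 1 B ≠ 0) : ∃ L : k⟦X⟧, constantCoeff L ≠ 0 ∧ B = X * comp L (X ^ m) := by
  obtain ⟨L, hL⟩ := exists_eq_X_pow_mul_comp_X_pow (by omega) hB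
  rw [Nat.mod_eq_of_lt hm, pow_one] at hL
  refine ⟨L, ?_, hL⟩
  rwa [hL, coeff_succ_X_mul, coeff_comp_X_pow _ (by omega), if_pos (dvd_zero m), Nat.zero_div,
    coeff_zero_eq_constantCoeff] at hB1

theorem coeff_comp_trunc (hB : X ^ d ∣ B) (hN : N < j * d) :
    coeff N (comp (trunc j A) B) = coeff N (comp A B) := by
  rw [coeff_comp, coeff_comp]
  refine Finset.sum_congr rfl fun i _ => ?_
  rw [Polynomial.coeff_coe, coeff_trunc]
  split_ifs with hij
  · rfl
  · have hBi : X ^ (i * d) ∣ B ^ i := by rw [pow_mul']; exact pow_dvd_pow_of_dvd hB i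
    rw [X_pow_dvd_iff.1 hBi N (by nlinarith), zero_mul, mul_zero]

theorem coeff_comp_eq_coeff_comp_trunc_left_add (hB : X ∣ B) (j : ℕ) :
    coeff j (comp A B) = coeff j (comp (trunc j A) B) + coeff j A * coeff 1 B ^ j := by
  rw [coeff_comp, coeff_comp, Finset.sum_range_succ, Finset.sum_range_succ, Polynomial.coeff_coe,
    coeff_trunc, if_neg (lt_irrefl j), zero_mul, add_zero, coeff_self_pow hB]
  congr 1
  refine Finset.sum_congr rfl fun i hi => ?_
  rw [Polynomial.coeff_coe, coeff_trunc, if_pos (Finset.mem_range.1 hi)]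

theorem coeff_comp_add_of_dvd {T E : k⟦X⟧} (hA : X ^ n ∣ A) (hT : X ∣ T) (hE : X ^ j ∣ E)
    (hn : 1 ≤ n) (hj : 2 ≤ j) :
    coeff (n - 1 + j) (comp A (T + E)) =
      coeff (n - 1 + j) (comp A T) + n * coeff n A * coeff 1 T ^ (n - 1) * coeff j E := by
  have hterm : ∀ i ∈ Finset.range (n - 1 + j + 1),
      coeff i A * coeff (n - 1 + j) ((T + E) ^ i) = coeff i A * coeff (n - 1 + j) (T ^ i) +
        if i = n then n * coeff n A * coeff 1 T ^ (n - 1) * coeff j E else 0 := by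
    intro i _
    obtain hin | hin := lt_or_ge i n
    · rw [X_pow_dvd_iff.1 hA i hin, if_neg hin.ne, zero_mul, zero_mul, add_zero]
    · rw [coeff_add_pow_of_dvd hT hE hn hj hin, mul_add]
      split_ifs with h
      · subst h; ring
      · rw [mul_zero]
  rw [coeff_comp, coeff_comp, Finset.sum_congr rfl hterm, Finset.sum_add_distrib,
    Finset.sum_ite_eq', if_pos (Finset.mem_range.2 (by omega))]

theorem coeff_comp_eq_coeff_comp_trunc_right_add (hA : X ^ n ∣ A) (hB : X ∣ B) (hn : 1 ≤ n)
    (hj : 2 ≤ j) :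
    coeff (n - 1 + j) (comp A B) =
      coeff (n - 1 + j) (comp A (trunc j B)) + n * coeff n A * coeff 1 B ^ (n - 1) * coeff j B := by
  have hT : X ∣ (trunc j B : k⟦X⟧) := by
    rw [X_dvd_iff, ← coeff_zero_eq_constantCoeff, coeff_coe_trunc_of_lt (by omega),
      coeff_zero_eq_constantCoeff, ← X_dvd_iff]
    exact hB
  have hE : X ^ j ∣ B - (trunc j B : k⟦X⟧) := X_pow_dvd_iff.2 fun i hi => by
    rw [map_sub, coeff_coe_trunc_of_lt hi, sub_self]
  have h := coeff_comp_add_of_dvd hA hT hE hn hj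
  rwa [add_sub_cancel, coeff_coe_trunc_of_lt (by omega), map_sub, Polynomial.coeff_coe, coeff_trunc,
    if_neg (lt_irrefl j), sub_zero] at h

end Comp

theorem exists_coeff_eq_trunc {R : Type*} [Semiring R] (Φ : ℕ → Polynomial R → R) :
    ∃ f : R⟦X⟧, ∀ j, coeff j f = Φ j (trunc j f) := by
  let P : ℕ → Polynomial R := fun j => Nat.rec 0 (fun j p => p + Polynomial.monomial j (Φ j p)) j
  have hP : ∀ j, trunc j (mk fun j => Φ j (P j)) = P j := by
    intro j
    induction j with
    | zero => rfl
    | succ j ih => rw [trunc_succ, ih, coeff_mk]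
  exact ⟨mk fun j => Φ j (P j), fun j => by rw [coeff_mk, hP]⟩

section Bottcher

variable {k : Type*} [Field k] {m n : ℕ} {A β : k⟦X⟧}

def IsBottcher (A : k⟦X⟧) (n : ℕ) (β : k⟦X⟧) : Prop :=
  β.order = 1 ∧ comp A β = comp β (X ^ n)

theorem IsBottcher.coeff_one_ne_zero (hβ : IsBottcher A n β) : coeff 1 β ≠ 0 :=
  (order_eq_nat (n := 1)).1 (by exact_mod_cast hβ.1) |>.1

theorem IsBottcher.X_dvd (hβ : IsBottcher A n β) : X ∣ β := by
  rw [X_dvd_iff, ← coeff_zero_eq_constantCoeff]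
  exact (order_eq_nat (n := 1)).1 (by exact_mod_cast hβ.1) |>.2 0 one_pos

theorem IsBottcher.supportedModEq_of_supportedModEq_one (hβ : IsBottcher A n β)
    (hβm : SupportedModEq m 1 β) : SupportedModEq m n A := by
  refine supportedModEq_of_forall_trunc fun j hA hj => ?_
  have h := congrArg (coeff j) hβ.2
  have hAβ : SupportedModEq m n (comp (trunc j A) β) := by simpa using hA.comp hβm
  have hβn : SupportedModEq m n (comp β (X ^ n)) := by simpa using hβm.comp (supportedModEq_X_pow n)
  rw [coeff_comp_eq_coeff_comp_trunc_left_add hβ.X_dvd, hAβ.coeff_eq_zero hj, zero_add,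
    hβn.coeff_eq_zero hj] at h
  exact (mul_eq_zero.1 h).resolve_right (pow_ne_zero _ hβ.coeff_one_ne_zero)

theorem IsBottcher.supportedModEq_one_of_supportedModEq [CharZero k] (hβ : IsBottcher A n β)
    (hn : 2 ≤ n) (hA : A.order = n) (hAm : SupportedModEq m n A) : SupportedModEq m 1 β := by
  obtain ⟨hAn, hA0⟩ := order_eq_nat.1 hA
  refine supportedModEq_of_forall_trunc fun j hT hj => ?_
  obtain hj2 | hj2 := lt_or_ge j 2
  · interval_cases j
    · rw [coeff_zero_eq_constantCoeff, ← X_dvd_iff]; exact hβ.X_dvd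
    · exact absurd rfl hj
  have hN : ¬ n - 1 + j ≡ n [MOD m] := fun h =>
    hj (Nat.ModEq.add_left_cancel' (n - 1) (by rwa [Nat.sub_add_cancel (by omega)]))
  have hAT : SupportedModEq m n (comp A (trunc j β)) := by simpa using hAm.comp hT
  have hTn : SupportedModEq m n (comp (trunc j β : k⟦X⟧) (X ^ n)) := by
    simpa using hT.comp (supportedModEq_X_pow n)
  have h := coeff_comp_eq_coeff_comp_trunc_right_add (X_pow_dvd_iff.2 hA0) hβ.X_dvd (by omega) hj2
  rw [hβ.2, ← coeff_comp_trunc (j := j) (dvd_refl _) (by have := Nat.add_le_mul hj2 hn; omega),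
    hTn.coeff_eq_zero hN, hAT.coeff_eq_zero hN, zero_add] at h
  have hn0 : (n : k) ≠ 0 := Nat.cast_ne_zero.2 (by omega)
  exact (mul_eq_zero.1 h.symm).resolve_left
    (mul_ne_zero (mul_ne_zero hn0 hAn) (pow_ne_zero _ hβ.coeff_one_ne_zero))

theorem exists_isBottcher [IsAlgClosed k] [CharZero k] (hn : 2 ≤ n) (hA : A.order = n) :
    ∃ β, IsBottcher A n β := by
  obtain ⟨hAn, hA0⟩ := order_eq_nat.1 hA
  obtain ⟨c, hc⟩ := IsAlgClosed.exists_pow_nat_eq (coeff n A)⁻¹ (n := n - 1) (by omega)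
  have hAc : coeff n A * c ^ (n - 1) = 1 := by rw [hc, mul_inv_cancel₀ hAn]
  have hc0 : c ≠ 0 := by
    rintro rfl
    rw [zero_pow (by omega), mul_zero] at hAc
    exact zero_ne_one hAc
  -- For `j ≥ 2`, `coeff j β` enters coefficient `n - 1 + j` of `comp A β` only as `n * coeff j β`
  -- (by `coeff_comp_eq_coeff_comp_trunc_right_add` and `hAc`), so the equation can be solved for it.
  obtain ⟨β, hβ⟩ := exists_coeff_eq_trunc fun j (T : Polynomial k) =>
    if j = 0 then 0 else if j = 1 then c else
      (n : k)⁻¹ * (coeff (n - 1 + j) (comp T (X ^ n)) - coeff (n - 1 + j) (comp A T))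
  have hβ0 : coeff 0 β = 0 := by simpa using hβ 0
  have hβ1 : coeff 1 β = c := by simpa using hβ 1
  have hβX : X ∣ β := X_dvd_iff.2 (by rw [← coeff_zero_eq_constantCoeff]; exact hβ0)
  refine ⟨β, ?_, ?_⟩
  · exact_mod_cast order_eq_nat.2 ⟨by rwa [hβ1], fun i hi => by interval_cases i; exact hβ0⟩
  ext N
  obtain hNn | hNn | ⟨j, hj, rfl⟩ : N < n ∨ N = n ∨ ∃ j, 2 ≤ j ∧ N = n - 1 + j := by
    rcases lt_trichotomy N n with h | h | h
    · exact .inl h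
    · exact .inr (.inl h)
    · exact .inr (.inr ⟨N + 1 - n, by omega, by omega⟩)
  · rw [coeff_comp, Finset.sum_eq_zero fun i hi => by
      rw [hA0 i (by have := Finset.mem_range.1 hi; omega), zero_mul],
      coeff_comp_X_pow β (by omega), Nat.div_eq_of_lt hNn, hβ0, ite_self]
  · rw [hNn, coeff_comp, Finset.sum_range_succ, Finset.sum_eq_zero fun i hi => by
      rw [hA0 i (Finset.mem_range.1 hi), zero_mul], zero_add, coeff_self_pow hβX,
      coeff_comp_X_pow β (by omega), if_pos dvd_rfl, Nat.div_self (by omega), hβ1]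
    rw [show c ^ n = c ^ (n - 1) * c by rw [← pow_succ, Nat.sub_add_cancel (by omega)],
      ← mul_assoc, hAc, one_mul]
  · have hn0 : (n : k) ≠ 0 := Nat.cast_ne_zero.2 (by omega)
    rw [coeff_comp_eq_coeff_comp_trunc_right_add (X_pow_dvd_iff.2 hA0) hβX (by omega) hj,
      ← coeff_comp_trunc (A := β) (j := j) dvd_rfl (by have := Nat.add_le_mul hj hn; omega), hβ j,
      if_neg (by omega), if_neg (by omega), hβ1]
    field_simp
    linear_combination (coeff (n - 1 + j) (comp (trunc j β : k⟦X⟧) (X ^ n)) -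
      coeff (n - 1 + j) (comp A (trunc j β))) * hAc

end Bottcher

theorem stmt16 {k : Type*} [Field k] [IsAlgClosed k] [CharZero k]
    {n m : ℕ} (hn : 2 ≤ n) (hm : 2 ≤ m)
    (A : PowerSeries k) (hA : A.order = (n : ℕ∞)) :
    (∃ (R : PowerSeries k) (r : ℕ), A = X ^ r * comp R (X ^ m)) ↔
      ∀ β : PowerSeries k, β.order = 1 → comp A β = comp β (X ^ n) →
        ∃ L : PowerSeries k, constantCoeff L ≠ 0 ∧ β = X * comp L (X ^ m) := by
  constructor
  · rintro ⟨R, r, hR⟩ β hβ1 hβA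
    have hβ : IsBottcher A n β := ⟨hβ1, hβA⟩
    have hAm : SupportedModEq m n A :=
      (hR ▸ supportedModEq_X_pow_mul_comp_X_pow R r).of_coeff_ne_zero (order_eq_nat.1 hA).1
    exact exists_eq_X_mul_comp_X_pow hm (hβ.supportedModEq_one_of_supportedModEq hn hA hAm)
      hβ.coeff_one_ne_zero
  · intro H
    obtain ⟨β, hβ⟩ := exists_isBottcher hn hA
    obtain ⟨L, -, hL⟩ := H β hβ.1 hβ.2
    have hβm : SupportedModEq m 1 β := by
      simpa [hL] using supportedModEq_X_pow_mul_comp_X_pow (m := m) L 1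
    obtain ⟨R, hR⟩ :=
      exists_eq_X_pow_mul_comp_X_pow (by omega) (hβ.supportedModEq_of_supportedModEq_one hβm)
    exact ⟨R, n % m, hR⟩
end
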